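/- Assume: the polarity is separated; m : Z∂ → Z∂ is monotone, R□v = Γ(m v) for every v ∈ Z∂, and R□ is smooth; b : Z₁ → Z₁ satisfies {z ∈ Z₁ | ∀ p, z R''□ p → p ∈ Γx} = Γ(b x) for every x ∈ Z₁; d : Z₁ → Z₁ is monotone and R⋄x = Γ(d x) for every x ∈ Z₁; (F6) for every stable A ⊆ Z₁, □A ⊆ (⋃_{x ∈ A} □(Γx))''; and (FD) d x ≼ b x for all x ∈ Z₁. Then the D-axiom holds in the lattice of stable sets: □A ⊆ ⋄A for every stable A ⊆ Z₁. -/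
import Mathlib


namespace DFML

variable {Z1 Zd : Type*}

/-- Right polar: U' ⊆ Z∂ for U ⊆ Z₁. -/
def pol1 (P : Z1 → Zd → Prop) (U : Set Z1) : Set Zd := {y | ∀ x ∈ U, P x y}

/-- Left polar: V' ⊆ Z₁ for V ⊆ Z∂. -/
def pol2 (P : Z1 → Zd → Prop) (V : Set Zd) : Set Z1 := {x | ∀ y ∈ V, P x y}

/-- Galois-stable subsets of Z₁. -/
def stab (P : Z1 → Zd → Prop) (A : Set Z1) : Prop := pol2 P (pol1 P A) = A

/-- Galois co-stable subsets of Z∂. -/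
def costab (P : Z1 → Zd → Prop) (B : Set Zd) : Prop := pol1 P (pol2 P B) = B

/-- Preorder on Z₁: u ≼ w iff {u}' ⊆ {w}'. -/
def le1 (P : Z1 → Zd → Prop) (u w : Z1) : Prop := pol1 P {u} ⊆ pol1 P {w}

/-- Preorder on Z∂: u ≼ w iff {u}' ⊆ {w}'. -/
def led (P : Z1 → Zd → Prop) (u w : Zd) : Prop := pol2 P {u} ⊆ pol2 P {w}

/-- Γu ⊆ Z₁. -/
def Gam1 (P : Z1 → Zd → Prop) (u : Z1) : Set Z1 := {w | le1 P u w}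

/-- Γv ⊆ Z∂. -/
def Gamd (P : Z1 → Zd → Prop) (v : Zd) : Set Zd := {w | led P v w}

/-- Closure on Z₁: U''. -/
def cl1 (P : Z1 → Zd → Prop) (U : Set Z1) : Set Z1 := pol2 P (pol1 P U)

/-- Closure on Z∂: V''. -/
def cld (P : Z1 → Zd → Prop) (V : Set Zd) : Set Zd := pol1 P (pol2 P V)

/-- Separated polarity: ≼ is antisymmetric on each sort. -/
def separated (P : Z1 → Zd → Prop) : Prop :=
  (∀ u w : Z1, le1 P u w → le1 P w u → u = w) ∧
  (∀ u w : Zd, led P u w → led P w u → u = w)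

/-- Section R⋄x of a relation R⋄ ⊆ Z₁ × Z₁. -/
def diaSec (R : Z1 → Z1 → Prop) (x : Z1) : Set Z1 := {z | R z x}

/-- Galois dual R'⋄ ⊆ Z∂ × Z₁: y R'⋄ x iff y ∈ (R⋄x)'. -/
def diaDual (P : Z1 → Zd → Prop) (R : Z1 → Z1 → Prop) (y : Zd) (x : Z1) : Prop :=
  y ∈ pol1 P (diaSec R x)

/-- Double dual R''⋄ ⊆ Z∂ × Z∂: y R''⋄ v iff v ∈ ({x | y R'⋄ x})'. -/
def diaDD (P : Z1 → Zd → Prop) (R : Z1 → Z1 → Prop) (y v : Zd) : Prop :=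
  v ∈ pol1 P {x | diaDual P R y x}

/-- Image operator ◇|U = ⋃_{x ∈ U} R⋄x. -/
def diaImg (R : Z1 → Z1 → Prop) (U : Set Z1) : Set Z1 := ⋃ x ∈ U, diaSec R x

/-- Diamond operator on stable sets: ⋄A = (◇|A)''. -/
def diaOp (P : Z1 → Zd → Prop) (R : Z1 → Z1 → Prop) (A : Set Z1) : Set Z1 :=
  cl1 P (diaImg R A)

/-- R⋄ is smooth: every section of its Galois dual is stable. -/
def diaSmooth (P : Z1 → Zd → Prop) (R : Z1 → Z1 → Prop) : Prop :=
  ∀ y : Zd, stab P {x | diaDual P R y x}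

/-- Section R□v of a relation R□ ⊆ Z∂ × Z∂. -/
def boxSec (R : Zd → Zd → Prop) (v : Zd) : Set Zd := {w | R w v}

/-- Galois dual R'□ ⊆ Z₁ × Z∂: x R'□ v iff x ∈ (R□v)'. -/
def boxDual (P : Z1 → Zd → Prop) (R : Zd → Zd → Prop) (x : Z1) (v : Zd) : Prop :=
  x ∈ pol2 P (boxSec R v)

/-- Double dual R''□ ⊆ Z₁ × Z₁: x R''□ z iff z ∈ ({v | x R'□ v})'. -/
def boxDD (P : Z1 → Zd → Prop) (R : Zd → Zd → Prop) (x z : Z1) : Prop :=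
  z ∈ pol2 P {v | boxDual P R x v}

/-- Image operator ◇⁻V = ⋃_{v ∈ V} R□v. -/
def boxImg (R : Zd → Zd → Prop) (V : Set Zd) : Set Zd := ⋃ v ∈ V, boxSec R v

/-- Box operator on stable sets: □A = (◇⁻(A'))'. -/
def boxOp (P : Z1 → Zd → Prop) (R : Zd → Zd → Prop) (A : Set Z1) : Set Z1 :=
  pol2 P (boxImg R (pol1 P A))

/-- R□ is smooth: every section of its Galois dual is co-stable. -/
def boxSmooth (P : Z1 → Zd → Prop) (R : Zd → Zd → Prop) : Prop :=
  ∀ x : Z1, costab P {v | boxDual P R x v}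

end DFML

open DFML

section Aux
variable {Z1 Zd : Type*} (P : Z1 → Zd → Prop)

lemma subset_cl1' (U : Set Z1) : U ⊆ cl1 P U := by
  intro x hx y hy; exact hy x hx

lemma pol1_anti {U V : Set Z1} (h : U ⊆ V) : pol1 P V ⊆ pol1 P U := by
  intro y hy x hx; exact hy x (h hx)

lemma pol2_anti {U V : Set Zd} (h : U ⊆ V) : pol2 P V ⊆ pol2 P U := by
  intro x hx y hy; exact hx y (h hy)

lemma cl1_mono' {U V : Set Z1} (h : U ⊆ V) : cl1 P U ⊆ cl1 P V :=
  pol2_anti P (pol1_anti P h)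

lemma cl1_min {U A : Set Z1} (h : U ⊆ A) (hA : stab P A) : cl1 P U ⊆ A := by
  have := cl1_mono' P h
  rwa [show cl1 P A = A from hA] at this

lemma Gam1_eq_cl1 (x : Z1) : Gam1 P x = cl1 P {x} := by
  ext w
  constructor
  · intro hw y hy
    exact hw hy w rfl
  · intro hw y hy x' hx'
    rw [Set.mem_singleton_iff] at hx'; subst hx'; exact hw y hy

lemma stab_cl1 (U : Set Z1) : stab P (cl1 P U) := by
  unfold stab cl1
  ext x
  constructor
  · intro hx y hy; exact hx y (fun z hz => hz y hy)
  · intro hx y hy; exact hy x hx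

lemma Gam1_stab (x : Z1) : stab P (Gam1 P x) := by
  rw [Gam1_eq_cl1]; exact stab_cl1 P _

lemma box_sub_dd {A : Set Z1} (R : Zd → Zd → Prop) (hA : stab P A) :
    boxOp P R A ⊆ {z | ∀ p : Z1, boxDD P R z p → p ∈ A} := by
  intro z hz p hp
  rw [← hA]
  intro y hy
  apply hp y
  intro w hw
  exact hz w (Set.mem_biUnion hy hw)

end Aux

/-- in a D-frame the D-axiom holds: □A ⊆ ⋄A for stable A. -/
theorem stmt10 {Z1 Zd : Type*} (P : Z1 → Zd → Prop)
    (sep : separated P)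
    (m : Zd → Zd) (mMono : ∀ v v' : Zd, led P v v' → led P (m v) (m v'))
    (R : Zd → Zd → Prop) (hR : ∀ v : Zd, boxSec R v = Gamd P (m v))
    (hRsmooth : boxSmooth P R)
    (b : Z1 → Z1)
    (hb : ∀ x : Z1, {z | ∀ p : Z1, boxDD P R z p → p ∈ Gam1 P x} = Gam1 P (b x))
    (d : Z1 → Z1) (dMono : ∀ x x' : Z1, le1 P x x' → le1 P (d x) (d x'))
    (Rd : Z1 → Z1 → Prop) (hRd : ∀ x : Z1, diaSec Rd x = Gam1 P (d x))
    (F6 : ∀ A : Set Z1, stab P A →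
      boxOp P R A ⊆ cl1 P (⋃ x ∈ A, boxOp P R (Gam1 P x)))
    (FD : ∀ x : Z1, le1 P (d x) (b x)) :
    ∀ A : Set Z1, stab P A → boxOp P R A ⊆ diaOp P Rd A := by
  intro A hA
  have hdia : stab P (diaOp P Rd A) := stab_cl1 P _
  -- each □(Γx) for x ∈ A is inside ⋄A
  have key : (⋃ x ∈ A, boxOp P R (Gam1 P x)) ⊆ diaOp P Rd A := by
    intro z hz
    obtain ⟨x, hxA, hzx⟩ := by simpa using hz
    have h1 : z ∈ Gam1 P (b x) := by
      rw [← hb x]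
      exact box_sub_dd P R (Gam1_stab P x) hzx
    -- b x ∈ diaImg Rd A
    have hbx : b x ∈ diaImg Rd A := by
      apply Set.mem_biUnion hxA
      rw [hRd x]
      exact FD x
    have h2 : Gam1 P (b x) ⊆ diaOp P Rd A := by
      rw [Gam1_eq_cl1]
      exact cl1_min P (Set.singleton_subset_iff.mpr (subset_cl1' P _ hbx)) hdia
    exact h2 h1
  intro z hz
  exact cl1_min P key hdia (F6 A hA hz)
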